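/- Soundness of the hand-specialized retargeted abstract interpreter: for every target program e ∈ {add n, mult n} and input i ∈ ℤ, we have ⟦e⟧_T i ∈ γ_ℤ (aint_T♯ (⟨enc_TS(e), i⟩)), where aint_T♯(i♯) := F♯_{≠0}(p♯, π₂♯(π₁♯ i♯) +♯ π₂♯ i♯) ⊔♯ F♯_{=0}(p♯, π₂♯(π₁♯ i♯) ×♯ π₂♯ i♯) with p♯ := π₁♯(π₁♯ i♯) =♯ η(0), applied to η of the encoded input. -/
import Mathlib


/-- Source-language values: integers and pairs. -/
inductive SrcVal : Type
  | int : ℤ → SrcVal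
  | pair : SrcVal → SrcVal → SrcVal
deriving DecidableEq

/-- Source-language expressions. -/
inductive SrcExp : Type
  | var : SrcExp
  | num : ℤ → SrcExp
  | add : SrcExp → SrcExp → SrcExp
  | mul : SrcExp → SrcExp → SrcExp
  | eq : SrcExp → SrcExp → SrcExp
  | pr : SrcExp → SrcExp → SrcExp
  | fst : SrcExp → SrcExp
  | snd : SrcExp → SrcExp
  | cond : SrcExp → SrcExp → SrcExp → SrcExp

def addV : SrcVal → SrcVal → SrcVal
  | .int m, .int n => .int (m + n)
  | _, _ => .int 0

def mulV : SrcVal → SrcVal → SrcVal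
  | .int m, .int n => .int (m * n)
  | _, _ => .int 0

def eqV (v₁ v₂ : SrcVal) : SrcVal := if v₁ = v₂ then .int 1 else .int 0

def fstV : SrcVal → SrcVal
  | .pair a _ => a
  | v => v

def sndV : SrcVal → SrcVal
  | .pair _ b => b
  | v => v

/-- A value counts as true iff it is a nonzero integer. -/
def truthy : SrcVal → Prop
  | .int n => n ≠ 0
  | _ => False

instance : DecidablePred truthy := fun v => by cases v <;> unfold truthy <;> infer_instance

/-- Concrete source semantics. -/
def evalS : SrcExp → SrcVal → SrcVal
  | .var, v => v
  | .num n, _ => .int n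
  | .add e₁ e₂, v => addV (evalS e₁ v) (evalS e₂ v)
  | .mul e₁ e₂, v => mulV (evalS e₁ v) (evalS e₂ v)
  | .eq e₁ e₂, v => eqV (evalS e₁ v) (evalS e₂ v)
  | .pr e₁ e₂, v => .pair (evalS e₁ v) (evalS e₂ v)
  | .fst e, v => fstV (evalS e v)
  | .snd e, v => sndV (evalS e v)
  | .cond p c a, v => if truthy (evalS p v) then evalS c v else evalS a v

/-- Target-language programs: add n or mult n. -/
inductive TgtExp : Type
  | add : ℤ → TgtExp
  | mult : ℤ → TgtExp

/-- Target semantics. -/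
def evalT : TgtExp → ℤ → ℤ
  | .add n, i => n + i
  | .mult n, i => n * i

/-- Encoding of target programs into source values. -/
def encTS : TgtExp → SrcVal
  | .add n => .pair (.int 0) (.int n)
  | .mult n => .pair (.int 1) (.int n)

/-- The concrete T-interpreter written in S:
`if fst (fst x) = 0 then snd (fst x) + snd x else snd (fst x) × snd x`. -/
def intTS : SrcExp :=
  .cond (.eq (.fst (.fst .var)) (.num 0))
    (.add (.snd (.fst .var)) (.snd .var))
    (.mul (.snd (.fst .var)) (.snd .var))

/-- Abstract-domain operations parameterizing the abstract interpreter. -/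
structure AbsOps (A : Type) where
  η : SrcVal → A
  aadd : A → A → A
  amul : A → A → A
  aeq : A → A → A
  apair : A → A → A
  afst : A → A
  asnd : A → A
  ajoin : A → A → A
  fne : A → A → A  -- filter ≠ 0
  fze : A → A → A  -- filter = 0

/-- The structural abstract evaluator. -/
def evalA {A : Type} (D : AbsOps A) : SrcExp → A → A
  | .var, a => a
  | .num n, _ => D.η (.int n)
  | .add e₁ e₂, a => D.aadd (evalA D e₁ a) (evalA D e₂ a)
  | .mul e₁ e₂, a => D.amul (evalA D e₁ a) (evalA D e₂ a)
  | .eq e₁ e₂, a => D.aeq (evalA D e₁ a) (evalA D e₂ a)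
  | .pr e₁ e₂, a => D.apair (evalA D e₁ a) (evalA D e₂ a)
  | .fst e, a => D.afst (evalA D e a)
  | .snd e, a => D.asnd (evalA D e a)
  | .cond p c al, a =>
      D.ajoin (D.fne (evalA D p a) (evalA D c a)) (D.fze (evalA D p a) (evalA D al a))

/-- The hand-specialized retargeted abstract interpreter. -/
def aintT {A : Type} (D : AbsOps A) (a : A) : A :=
  let p := D.aeq (D.afst (D.afst a)) (D.η (.int 0))
  D.ajoin (D.fne p (D.aadd (D.asnd (D.afst a)) (D.asnd a)))
    (D.fze p (D.amul (D.asnd (D.afst a)) (D.asnd a)))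

/-- Integer concretization of an abstract value. -/
def γZ {A : Type} (γ : A → Set SrcVal) (a : A) : Set ℤ := {n : ℤ | SrcVal.int n ∈ γ a}

theorem aintT_sound
    {A : Type} (D : AbsOps A) (γ : A → Set SrcVal)
    (hη : ∀ v, v ∈ γ (D.η v))
    (hadd : ∀ v₁ v₂ a₁ a₂, v₁ ∈ γ a₁ → v₂ ∈ γ a₂ → addV v₁ v₂ ∈ γ (D.aadd a₁ a₂))
    (hmul : ∀ v₁ v₂ a₁ a₂, v₁ ∈ γ a₁ → v₂ ∈ γ a₂ → mulV v₁ v₂ ∈ γ (D.amul a₁ a₂))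
    (heq : ∀ v₁ v₂ a₁ a₂, v₁ ∈ γ a₁ → v₂ ∈ γ a₂ → eqV v₁ v₂ ∈ γ (D.aeq a₁ a₂))
    (hpair : ∀ v₁ v₂ a₁ a₂, v₁ ∈ γ a₁ → v₂ ∈ γ a₂ → SrcVal.pair v₁ v₂ ∈ γ (D.apair a₁ a₂))
    (hfst : ∀ v a, v ∈ γ a → fstV v ∈ γ (D.afst a))
    (hsnd : ∀ v a, v ∈ γ a → sndV v ∈ γ (D.asnd a))
    (hjoin : ∀ a₁ a₂, γ a₁ ∪ γ a₂ ⊆ γ (D.ajoin a₁ a₂))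
    (hfne : ∀ v p a w, v ∈ γ p → truthy v → w ∈ γ a → w ∈ γ (D.fne p a))
    (hfze : ∀ v p a w, v ∈ γ p → ¬ truthy v → w ∈ γ a → w ∈ γ (D.fze p a)) :
    ∀ (e : TgtExp) (i : ℤ),
      evalT e i ∈ γZ γ (aintT D (D.η (.pair (encTS e) (.int i)))) := by
  intro e i
  cases e with
  | add n =>
    set v : SrcVal := .pair (encTS (.add n)) (.int i) with hv
    have hva := hη v
    have hp : eqV (fstV (fstV v)) (.int 0) ∈
        γ (D.aeq (D.afst (D.afst (D.η v))) (D.η (.int 0))) :=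
      heq _ _ _ _ (hfst _ _ (hfst _ _ hva)) (hη _)
    have hb : addV (sndV (fstV v)) (sndV v) ∈
        γ (D.aadd (D.asnd (D.afst (D.η v))) (D.asnd (D.η v))) :=
      hadd _ _ _ _ (hsnd _ _ (hfst _ _ hva)) (hsnd _ _ hva)
    have : SrcVal.int (n + i) ∈ γ (aintT D (D.η v)) := by
      apply hjoin _ _
      left
      exact hfne _ _ _ _ hp (by simp [hv, encTS, fstV, eqV, truthy]) hb
    simpa [γZ, evalT] using this
  | mult n =>
    set v : SrcVal := .pair (encTS (.mult n)) (.int i) with hv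
    have hva := hη v
    have hp : eqV (fstV (fstV v)) (.int 0) ∈
        γ (D.aeq (D.afst (D.afst (D.η v))) (D.η (.int 0))) :=
      heq _ _ _ _ (hfst _ _ (hfst _ _ hva)) (hη _)
    have hb : mulV (sndV (fstV v)) (sndV v) ∈
        γ (D.amul (D.asnd (D.afst (D.η v))) (D.asnd (D.η v))) :=
      hmul _ _ _ _ (hsnd _ _ (hfst _ _ hva)) (hsnd _ _ hva)
    have : SrcVal.int (n * i) ∈ γ (aintT D (D.η v)) := by
      apply hjoin _ _
      right
      exact hfze _ _ _ _ hp (by simp [hv, encTS, fstV, eqV, truthy]) hb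
    simpa [γZ, evalT] using this
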